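/- arXiv:1410.1254 — 3 statements merged into one kernel-verified Lean document; each statement's English description precedes it below -/
import Mathlib

section
/- The monodromy matrices of the Picard–Fuchs equation of the mirror family of degree-12 K3 surfaces satisfy the relation M₀·M_{a₁}·M_{a₂}·M_∞ = I₃ (the 3×3 identity matrix). -/
open Matrix

/-- Monodromy matrix around `x = 0`. -/
def M₀ : Matrix (Fin 3) (Fin 3) ℤ := !![1, 0, 0; 1, 1, 0; -6, -12, 1]

/-- Monodromy matrix around `x = a₁`. -/
def Ma₁ : Matrix (Fin 3) (Fin 3) ℤ := !![0, 0, 1; 0, 1, 0; 1, 0, 0]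

/-- Monodromy matrix around `x = a₂`. -/
def Ma₂ : Matrix (Fin 3) (Fin 3) ℤ := !![-24, 120, 25; -10, 49, 10; 25, -120, -24]

/-- Monodromy matrix around `x = ∞`. -/
def Minf : Matrix (Fin 3) (Fin 3) ℤ := !![49, -168, -24; 21, -71, -10; -54, 180, 25]

/-- The connection matrix `U` between the two MUM points. -/
def U : Matrix (Fin 3) (Fin 3) ℤ := !![3, 12, -2; 1, 5, -1; -2, -12, 3]

/-- The symmetric bilinear form `Σ₆ = [[0,0,1],[0,12,0],[1,0,0]]`. -/
def Sigma6 : Matrix (Fin 3) (Fin 3) ℤ := !![0, 0, 1; 0, 12, 0; 1, 0, 0]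

/-- The K3 monodromy matrices satisfy `M₀·M_{a₁}·M_{a₂}·M_∞ = I₃`. -/
theorem monodromy_relation_K3 : M₀ * Ma₁ * Ma₂ * Minf = 1 := by
  simp only [M₀, Ma₁, Ma₂, Minf]
  norm_num [Matrix.mul_fin_three, Matrix.one_fin_three, ← Matrix.one_fin_three]
end

section
/- If (v,w) is a pair of symmetric 4×4 complex matrices satisfying the Plücker relations of G(3,6), then det v = det w. -/
open Matrix

/-- The smaller element `ǐ₁` of the complement of a 2-element subset `{i₁, i₂}`
of `{1,2,3,4}` (indexed by `Fin 4`). -/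
def dual₁ (i₁ i₂ : Fin 4) : Fin 4 :=
  (({i₁, i₂}ᶜ : Finset (Fin 4))).min' (by
    rw [← Finset.card_pos, Finset.card_compl]
    have h : ({i₁, i₂} : Finset (Fin 4)).card ≤ 2 :=
      (Finset.card_insert_le _ _).trans (by simp)
    simp only [Fintype.card_fin]
    omega)

/-- The larger element `ǐ₂` of the complement of a 2-element subset `{i₁, i₂}`
of `{1,2,3,4}` (indexed by `Fin 4`). -/
def dual₂ (i₁ i₂ : Fin 4) : Fin 4 :=
  (({i₁, i₂}ᶜ : Finset (Fin 4))).max' (by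
    rw [← Finset.card_pos, Finset.card_compl]
    have h : ({i₁, i₂} : Finset (Fin 4)).card ≤ 2 :=
      (Finset.card_insert_le _ _).trans (by simp)
    simp only [Fintype.card_fin]
    omega)

/-- The sign `ε(I)` of the permutation sending `(1,2,3,4)` to `(i₁,i₂,ǐ₁,ǐ₂)`,
for `I = {i₁ < i₂}` with complement `Ǐ = {ǐ₁ < ǐ₂}`. -/
noncomputable def eps (i₁ i₂ : Fin 4) : ℂ :=
  if h : Function.Bijective ![i₁, i₂, dual₁ i₁ i₂, dual₂ i₁ i₂] then
    ((Equiv.Perm.sign (Equiv.ofBijective _ h) : ℤ) : ℂ)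
  else 0

/-- The 2×2 minor `m[I,J] = m_{i₁j₁}m_{i₂j₂} − m_{i₁j₂}m_{i₂j₁}`. -/
def minor (m : Matrix (Fin 4) (Fin 4) ℂ) (i₁ i₂ j₁ j₂ : Fin 4) : ℂ :=
  m i₁ j₁ * m i₂ j₂ - m i₁ j₂ * m i₂ j₁

/-- The pair `(v,w)` of symmetric 4×4 complex matrices satisfies the Plücker
relations of `G(3,6)` (the generators of the Plücker ideal of the embedding
`G(3,∧²V₄) ⊂ ℙ(S²V₄ ⊕ S²V₄*)` given by the double spin decomposition):
(i) `v[I,J] = ε(I)ε(J)·w[Ǐ,J̌]` for all 2-element subsets `I, J`, and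
(ii) `v·w` has vanishing off-diagonal entries and equal diagonal entries. -/
structure PluckerPair (v w : Matrix (Fin 4) (Fin 4) ℂ) : Prop where
  symm_v : v.IsSymm
  symm_w : w.IsSymm
  minor_rel : ∀ i₁ i₂ j₁ j₂ : Fin 4, i₁ < i₂ → j₁ < j₂ →
    minor v i₁ i₂ j₁ j₂ =
      eps i₁ i₂ * eps j₁ j₂ *
        minor w (dual₁ i₁ i₂) (dual₂ i₁ i₂) (dual₁ j₁ j₂) (dual₂ j₁ j₂)
  offDiag : ∀ i j : Fin 4, i ≠ j → (v * w) i j = 0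
  diag : ∀ i j : Fin 4, (v * w) i i = (v * w) j j

/-!
Expand the determinant along the first two rows (generalized Laplace expansion):
`det m = Σ_J ε(J) m[12,J] m[34,J̌]`. The relations with `I = {1,2}` read `v[12,J] = ε(J) w[34,J̌]`;
those with `I = {3,4}`, together with `ε(J̌) = ε(J)`, give `w[12,J] = ε(J) v[34,J̌]`. As `ε(J)² = 1`,
both determinants become the symmetric pairing `Σ_J v[34,J̌] w[34,J̌]`.
-/

@[simp] lemma dual_zero_one : dual₁ 0 1 = 2 ∧ dual₂ 0 1 = 3 := by decide
@[simp] lemma dual_zero_two : dual₁ 0 2 = 1 ∧ dual₂ 0 2 = 3 := by decide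
@[simp] lemma dual_zero_three : dual₁ 0 3 = 1 ∧ dual₂ 0 3 = 2 := by decide
@[simp] lemma dual_one_two : dual₁ 1 2 = 0 ∧ dual₂ 1 2 = 3 := by decide
@[simp] lemma dual_one_three : dual₁ 1 3 = 0 ∧ dual₂ 1 3 = 2 := by decide
@[simp] lemma dual_two_three : dual₁ 2 3 = 0 ∧ dual₂ 2 3 = 1 := by decide

@[simp] lemma eps_zero_one : eps 0 1 = 1 := by rw [eps, dif_pos (by decide)]; norm_cast
@[simp] lemma eps_zero_two : eps 0 2 = -1 := by rw [eps, dif_pos (by decide)]; norm_cast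
@[simp] lemma eps_zero_three : eps 0 3 = 1 := by rw [eps, dif_pos (by decide)]; norm_cast
@[simp] lemma eps_one_two : eps 1 2 = 1 := by rw [eps, dif_pos (by decide)]; norm_cast
@[simp] lemma eps_one_three : eps 1 3 = -1 := by rw [eps, dif_pos (by decide)]; norm_cast
@[simp] lemma eps_two_three : eps 2 3 = 1 := by rw [eps, dif_pos (by decide)]; norm_cast

section Pair

variable {i j : Fin 4}

lemma dual₁_lt_dual₂ (h : i < j) : dual₁ i j < dual₂ i j := by
  revert i j; decide

lemma dual_dual (h : i < j) :
    dual₁ (dual₁ i j) (dual₂ i j) = i ∧ dual₂ (dual₁ i j) (dual₂ i j) = j := by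
  revert i j; decide

lemma eps_dual (h : i < j) : eps (dual₁ i j) (dual₂ i j) = eps i j := by
  fin_cases i <;> fin_cases j <;> simp_all

lemma eps_mul_self (h : i ≠ j) : eps i j * eps i j = 1 := by
  have hbij : Function.Bijective ![i, j, dual₁ i j, dual₂ i j] := by revert i j; decide
  rw [eps, dif_pos hbij, ← Int.cast_mul, ← Units.val_mul, Int.units_mul_self, Units.val_one,
    Int.cast_one]

end Pair

lemma det_eq_sum_eps_mul_minor_mul_minor (m : Matrix (Fin 4) (Fin 4) ℂ) :
    m.det = ∑ p : Fin 4 × Fin 4 with p.1 < p.2,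
      eps p.1 p.2 * minor m 0 1 p.1 p.2 * minor m 2 3 (dual₁ p.1 p.2) (dual₂ p.1 p.2) := by
  simp only [Finset.sum_filter, Fintype.sum_prod_type, Fin.sum_univ_four, Fin.reduceLT, ite_true,
    ite_false, add_zero, zero_add, eps_zero_one, eps_zero_two, eps_zero_three, eps_one_two,
    eps_one_three, eps_two_three, dual_zero_one, dual_zero_two, dual_zero_three, dual_one_two,
    dual_one_three, dual_two_three, minor]
  rw [det_succ_row_zero]
  simp only [Fin.sum_univ_four, det_fin_three]
  simp [Fin.succAbove]
  ring

lemma det_eq_sum_minor_mul_minor_of_minor_eq {m n : Matrix (Fin 4) (Fin 4) ℂ}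
    (h : ∀ i j : Fin 4, i < j → minor m 0 1 i j = eps i j * minor n 2 3 (dual₁ i j) (dual₂ i j)) :
    m.det = ∑ p : Fin 4 × Fin 4 with p.1 < p.2,
      minor m 2 3 (dual₁ p.1 p.2) (dual₂ p.1 p.2) * minor n 2 3 (dual₁ p.1 p.2) (dual₂ p.1 p.2) := by
  rw [det_eq_sum_eps_mul_minor_mul_minor]
  refine Finset.sum_congr rfl fun p hp => ?_
  have hlt : p.1 < p.2 := (Finset.mem_filter.1 hp).2
  rw [h _ _ hlt]
  linear_combination
    minor n 2 3 (dual₁ p.1 p.2) (dual₂ p.1 p.2) * minor m 2 3 (dual₁ p.1 p.2) (dual₂ p.1 p.2) *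
      eps_mul_self hlt.ne

/-- If `(v,w)` satisfies the Plücker relations of `G(3,6)`, then `det v = det w`. -/
theorem det_eq_of_plucker (v w : Matrix (Fin 4) (Fin 4) ℂ) (h : PluckerPair v w) :
    v.det = w.det := by
  have hv (i j : Fin 4) (hij : i < j) :
      minor v 0 1 i j = eps i j * minor w 2 3 (dual₁ i j) (dual₂ i j) := by
    simpa using h.minor_rel 0 1 i j (by decide) hij
  have hw (i j : Fin 4) (hij : i < j) :
      minor w 0 1 i j = eps i j * minor v 2 3 (dual₁ i j) (dual₂ i j) := by
    have hrel := h.minor_rel 2 3 _ _ (by decide) (dual₁_lt_dual₂ hij)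
    rw [eps_dual hij, (dual_dual hij).1, (dual_dual hij).2] at hrel
    simp only [eps_two_three, dual_two_three, one_mul] at hrel
    linear_combination (-eps i j) * hrel - minor w 0 1 i j * eps_mul_self hij.ne
  rw [det_eq_sum_minor_mul_minor_of_minor_eq hv, det_eq_sum_minor_mul_minor_of_minor_eq hw]
  exact Finset.sum_congr rfl fun _ _ => mul_comm _ _
end

section
/- If (v,w) is a pair of symmetric 4×4 complex matrices satisfying the Plücker relations of G(3,6), then the rank of v is not equal to 3 and the rank of w is not equal to 3. -/
open Matrix

section Aux

open Submodule Module

lemma dual_dual_s15 : ∀ k₁ k₂ : Fin 4, k₁ < k₂ →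
    dual₁ (dual₁ k₁ k₂) (dual₂ k₁ k₂) = k₁ ∧ dual₂ (dual₁ k₁ k₂) (dual₂ k₁ k₂) = k₂ ∧
      dual₁ k₁ k₂ < dual₂ k₁ k₂ := by decide

lemma dual_bijective : ∀ i₁ i₂ : Fin 4, i₁ < i₂ →
    Function.Bijective ![i₁, i₂, dual₁ i₁ i₂, dual₂ i₁ i₂] := by decide

lemma eps_ne_zero (i₁ i₂ : Fin 4) (h : i₁ < i₂) : eps i₁ i₂ ≠ 0 := by
  unfold eps
  rw [dif_pos (dual_bijective i₁ i₂ h)]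
  rcases Int.units_eq_one_or (Equiv.Perm.sign
      (Equiv.ofBijective _ (dual_bijective i₁ i₂ h))) with hs | hs <;> rw [hs] <;> norm_num

lemma minors_all (m : Matrix (Fin 4) (Fin 4) ℂ)
    (h : ∀ i₁ i₂ j₁ j₂ : Fin 4, i₁ < i₂ → j₁ < j₂ → minor m i₁ i₂ j₁ j₂ = 0) :
    ∀ i₁ i₂ j₁ j₂ : Fin 4, minor m i₁ i₂ j₁ j₂ = 0 := by
  have h' : ∀ i₁ i₂ j₁ j₂ : Fin 4, i₁ < i₂ → j₁ < j₂ →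
      m i₁ j₁ * m i₂ j₂ - m i₁ j₂ * m i₂ j₁ = 0 := h
  intro i₁ i₂ j₁ j₂
  show m i₁ j₁ * m i₂ j₂ - m i₁ j₂ * m i₂ j₁ = 0
  rcases lt_trichotomy i₁ i₂ with hi | rfl | hi <;>
    rcases lt_trichotomy j₁ j₂ with hj | rfl | hj
  · linear_combination h' i₁ i₂ j₁ j₂ hi hj
  · ring
  · linear_combination -h' i₁ i₂ j₂ j₁ hi hj
  · ring
  · ring
  · ring
  · linear_combination -h' i₂ i₁ j₁ j₂ hi hj
  · ring
  · linear_combination h' i₂ i₁ j₂ j₁ hi hj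

lemma rank_le_one_of_minors (m : Matrix (Fin 4) (Fin 4) ℂ)
    (h : ∀ i₁ i₂ j₁ j₂ : Fin 4, minor m i₁ i₂ j₁ j₂ = 0) : m.rank ≤ 1 := by
  by_cases hm : m = 0
  · simp [hm]
  · obtain ⟨i₀, j₀, h₀⟩ : ∃ i j, m i j ≠ 0 := by
      by_contra hctr
      push_neg at hctr
      exact hm (by ext i j; simpa using hctr i j)
    rw [Matrix.rank_eq_finrank_span_row]
    have hle : Submodule.span ℂ (Set.range m) ≤ Submodule.span ℂ {m i₀} := by
      rw [Submodule.span_le]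
      rintro _ ⟨i, rfl⟩
      rw [SetLike.mem_coe, Submodule.mem_span_singleton]
      refine ⟨m i j₀ / m i₀ j₀, funext fun j => ?_⟩
      have hmin : m i j₀ * m i₀ j - m i j * m i₀ j₀ = 0 := h i i₀ j₀ j
      simp only [Pi.smul_apply, smul_eq_mul]
      field_simp
      linear_combination hmin
    refine le_trans (Submodule.finrank_mono hle) ?_
    rcases eq_or_ne (m i₀) 0 with h0 | h0
    · rw [h0, Submodule.span_zero_singleton]
      simp
    · exact le_of_eq (finrank_span_singleton h0)

lemma minors_of_rank_le_one (m : Matrix (Fin 4) (Fin 4) ℂ) (h : m.rank ≤ 1) :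
    ∀ i₁ i₂ j₁ j₂ : Fin 4, minor m i₁ i₂ j₁ j₂ = 0 := by
  rw [Matrix.rank_eq_finrank_span_row] at h
  have hp : (Submodule.span ℂ (Set.range m)).IsPrincipal :=
    (Submodule.finrank_le_one_iff_isPrincipal _).1 h
  obtain ⟨u, hu⟩ := hp.principal
  intro i₁ i₂ j₁ j₂
  have h₁ : m i₁ ∈ Submodule.span ℂ ({u} : Set (Fin 4 → ℂ)) := by
    rw [← hu]; exact Submodule.subset_span (Set.mem_range_self i₁)
  have h₂ : m i₂ ∈ Submodule.span ℂ ({u} : Set (Fin 4 → ℂ)) := by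
    rw [← hu]; exact Submodule.subset_span (Set.mem_range_self i₂)
  obtain ⟨a, ha⟩ := Submodule.mem_span_singleton.1 h₁
  obtain ⟨b, hb⟩ := Submodule.mem_span_singleton.1 h₂
  show m i₁ j₁ * m i₂ j₂ - m i₁ j₂ * m i₂ j₁ = 0
  rw [← congrFun ha j₁, ← congrFun ha j₂, ← congrFun hb j₁, ← congrFun hb j₂]
  simp only [Pi.smul_apply, smul_eq_mul]
  ring

end Aux

/-- If `(v,w)` satisfies the Plücker relations of `G(3,6)`, then neither `v`
nor `w` has rank `3`. -/
theorem rank_ne_three_of_plucker (v w : Matrix (Fin 4) (Fin 4) ℂ) (h : PluckerPair v w) :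
    v.rank ≠ 3 ∧ w.rank ≠ 3 := by
  have hc : v * w = ((v * w) 0 0) • (1 : Matrix (Fin 4) (Fin 4) ℂ) := by
    ext i j
    by_cases hij : i = j
    · subst hij
      simp only [Matrix.smul_apply, Matrix.one_apply_eq, smul_eq_mul, mul_one]
      exact h.diag i 0
    · simp only [Matrix.smul_apply, Matrix.one_apply_ne hij, smul_eq_mul, mul_zero]
      exact h.offDiag i j hij
  by_cases hc0 : (v * w) 0 0 = 0
  · have hvw0 : v * w = 0 := by rw [hc, hc0, zero_smul]
    have hsum := Matrix.rank_add_rank_le_card_of_mul_eq_zero hvw0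
    simp only [Fintype.card_fin] at hsum
    constructor
    · intro h3
      have hw1 : w.rank ≤ 1 := by omega
      have hwmin := minors_of_rank_le_one w hw1
      have hvmin : ∀ i₁ i₂ j₁ j₂ : Fin 4, i₁ < i₂ → j₁ < j₂ → minor v i₁ i₂ j₁ j₂ = 0 := by
        intro i₁ i₂ j₁ j₂ hi hj
        rw [h.minor_rel i₁ i₂ j₁ j₂ hi hj, hwmin, mul_zero]
      have := rank_le_one_of_minors v (minors_all v hvmin)
      omega
    · intro h3
      have hv1 : v.rank ≤ 1 := by omega
      have hvmin := minors_of_rank_le_one v hv1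
      have hwmin : ∀ k₁ k₂ l₁ l₂ : Fin 4, k₁ < k₂ → l₁ < l₂ → minor w k₁ k₂ l₁ l₂ = 0 := by
        intro k₁ k₂ l₁ l₂ hk hl
        obtain ⟨hk1, hk2, hk3⟩ := dual_dual_s15 k₁ k₂ hk
        obtain ⟨hl1, hl2, hl3⟩ := dual_dual_s15 l₁ l₂ hl
        have hrel := h.minor_rel (dual₁ k₁ k₂) (dual₂ k₁ k₂) (dual₁ l₁ l₂) (dual₂ l₁ l₂) hk3 hl3
        rw [hk1, hk2, hl1, hl2, hvmin] at hrel
        have he1 := eps_ne_zero _ _ hk3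
        have he2 := eps_ne_zero _ _ hl3
        rcases mul_eq_zero.1 hrel.symm with h' | h'
        · rcases mul_eq_zero.1 h' with h'' | h''
          · exact absurd h'' he1
          · exact absurd h'' he2
        · exact h'
      have := rank_le_one_of_minors w (minors_all w hwmin)
      omega
  · set c := (v * w) 0 0 with hcdef
    have h1 : v * (c⁻¹ • w) = 1 := by
      rw [Matrix.mul_smul, hc, smul_smul, inv_mul_cancel₀ hc0, one_smul]
    have h2 : (c⁻¹ • v) * w = 1 := by
      rw [Matrix.smul_mul, hc, smul_smul, inv_mul_cancel₀ hc0, one_smul]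
    have hv : IsUnit v := (Matrix.isUnit_iff_isUnit_det v).2 (Matrix.isUnit_det_of_right_inverse h1)
    have hw : IsUnit w := (Matrix.isUnit_iff_isUnit_det w).2 (Matrix.isUnit_det_of_left_inverse h2)
    rw [Matrix.rank_of_isUnit v hv, Matrix.rank_of_isUnit w hw]
    simp
end
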